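/- Let X and Y be J-posets and let φ: Str X → Str Y be an isomorphism of posets. Then there exists an isomorphism of posets ρ: X → Y such that for every x ∈ X₁, φ({x}, {z ∈ X₂ : z > x}) = ({ρ(x)}, {z ∈ Y₂ : z > ρ(x)}), and for every m ∈ X₂, φ maps (Str X)_{{m}} onto (Str Y)_{{ρ(m)}}. -/

import Mathlib

/-!
The order of `Str X` remembers `X`. The full pairs `({x}, {z ∈ X₂ | x < z})` are exactly the
elements `p` such that every `q` whose strict upper set contains that of `p` equals `p`, and the
elements with a singleton second coordinate are exactly those whose strict upper set is
directed; two of the latter have a common upper bound iff their second coordinates agree.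
All of this is invariant under an isomorphism `Str X ≃ Str Y`, which therefore induces
bijections `X₁ ≃ Y₁` and `X₂ ≃ Y₂`. The engine behind every characterization is (J3): any
`p` can be enlarged by a finite `K ⊆ X₁` whose only strict upper bound is a prescribed
`m ∈ B(p)`, giving an element `> p` of `(Str X)_{m}`. The same construction shows that
`x < m` iff the full pair of `x` lies below an element of `(Str X)_{m}`, so together with
root ↦ root the bijections form an order isomorphism `X ≃ Y`.
-/

open Order Set

/-- The minimal upper bound set of `A`: the minimal elements of the set of upper bounds. -/
def mub (X : Type*) [PartialOrder X] (A : Set X) : Set X :=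
  {x ∈ upperBounds A | ∀ y ∈ upperBounds A, ¬ y < x}

/-- The set of elements of height `i` in `X`. -/
def level (X : Type*) [PartialOrder X] (i : ℕ) : Set X :=
  {x : X | Order.height x = (i : ℕ∞)}

/-- A J-poset: a countable poset with a unique minimal element satisfying (J1)-(J4). -/
structure IsJPoset (X : Type*) [PartialOrder X] : Prop where
  countable : Countable X
  uniqueMin : ∃! x : X, IsMin x
  dim2 : Order.krullDim X = 2
  mubFinite : ∀ A : Set X, A.Nonempty → (mub X A).Finite
  j2 : ∀ x ∈ level X 1, {z : X | x < z}.Infinite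
  j3 : ∀ m ∈ level X 2, ∀ F : Set X, F ⊆ level X 1 → F.Finite →
        ∃ K : Set X, K ⊆ level X 1 ∧ K.Finite ∧ Disjoint K F ∧ mub X K = {m}
  j4 : ∀ T : Set X, T ⊆ level X 2 → T.Finite → T.Nonempty →
        ∃ t ∈ level X 1, ∀ m ∈ T, t < m

/-- `(A, B)` is a member of `Str X`. -/
def StrMem (X : Type*) [PartialOrder X] (A B : Set X) : Prop :=
  A ⊆ level X 1 ∧ B ⊆ level X 2 ∧
  ((A.Finite ∧ A.Nonempty ∧ B.Finite ∧ B.Nonempty) ∨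
    (∃ x, x ∈ level X 1 ∧ A = {x} ∧ B = {z ∈ level X 2 | x < z})) ∧
  (∃ a ∈ A, ∀ b ∈ B, a < b)

/-- `(C, D)` dominates `(A, B)` via `W`. -/
def Dominates (X : Type*) [PartialOrder X] (C D A B W : Set X) : Prop :=
  A ⊂ C ∧ D ⊆ B ∧ W ⊆ C ∧ W.Nonempty ∧
  (∀ w ∈ W, ∀ d ∈ D, w < d) ∧
  (∀ a ∈ A, ∀ m : X, a < m → (∀ w ∈ W, w < m) → m ∈ D)

/-- The order on `Str X`: `(A,B) ≤ (C,D)`. -/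
def StrLE (X : Type*) [PartialOrder X] (A B C D : Set X) : Prop :=
  (A = C ∧ B = D) ∨ ∃ W : Set X, Dominates X C D A B W

/-- The strict order on `Str X`: `(A,B) < (C,D)`. -/
def StrLT (X : Type*) [PartialOrder X] (A B C D : Set X) : Prop :=
  StrLE X A B C D ∧ ¬(A = C ∧ B = D)

/-- `ℓ(A,B)`: the number of `a ∈ A` with `a < b` for all `b ∈ B`. -/
noncomputable def ell (X : Type*) [PartialOrder X] (A B : Set X) : ℕ :=
  {a ∈ A | ∀ b ∈ B, a < b}.ncard

/-- `η(A,B) = |A| - ℓ(A,B)`. -/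
noncomputable def eta (X : Type*) [PartialOrder X] (A B : Set X) : ℕ :=
  A.ncard - ell X A B

/-- `Str X` as a type of pairs. -/
abbrev Str (X : Type*) [PartialOrder X] := {p : Set X × Set X // StrMem X p.1 p.2}

def strLE {X : Type*} [PartialOrder X] (p q : Str X) : Prop :=
  StrLE X p.1.1 p.1.2 q.1.1 q.1.2

def strLT {X : Type*} [PartialOrder X] (p q : Str X) : Prop :=
  strLE p q ∧ p ≠ q

/-- Membership in `Str_F X`: members of `Str X` with both coordinates finite. -/
def StrFMem (X : Type*) [PartialOrder X] (A B : Set X) : Prop :=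
  StrMem X A B ∧ A.Finite ∧ B.Finite

/-- `Str_F X` as a type of pairs. -/
abbrev StrF (X : Type*) [PartialOrder X] := {p : Set X × Set X // StrFMem X p.1 p.2}

def strFLE {X : Type*} [PartialOrder X] (p q : StrF X) : Prop :=
  StrLE X p.1.1 p.1.2 q.1.1 q.1.2

/-- `K_{Str_F X}(z)`: all `(K, {b}) ∈ Str_F X` with `z ∈ K` and `mub K = {b}`. -/
def KSet (X : Type*) [PartialOrder X] (z : X) : Set (StrF X) :=
  {p | z ∈ p.1.1 ∧ ∃ b : X, p.1.2 = {b} ∧ mub X p.1.1 = {b}}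

/-- The three-element poset `𝕀₂`: two incomparable minimal elements below one top element,
realized as the nonempty subsets of a two-element set ordered by inclusion. -/
abbrev I2 := {s : Set (Fin 2) // s.Nonempty}

section Level

variable {X : Type*} [PartialOrder X]

lemma eq_of_mem_level {i j : ℕ} {x : X} (hi : x ∈ level X i) (hj : x ∈ level X j) : i = j := by
  exact_mod_cast hi.symm.trans hj

lemma not_isMin_of_mem_level {i : ℕ} {x : X} (hx : x ∈ level X i) (hi : i ≠ 0) : ¬IsMin x := by
  rw [← height_eq_zero, show height x = i from hx]
  exact_mod_cast hi

end Level

namespace IsJPoset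

variable {X : Type*} [PartialOrder X] (hX : IsJPoset X)
include hX

lemma height_le_two (x : X) : height x ≤ 2 := by
  have h := height_le_krullDim x
  rw [hX.dim2] at h
  exact WithBot.coe_le_coe.mp h

lemma height_strictMono : StrictMono (height : X → ℕ∞) := fun x _ hxy =>
  Order.height_strictMono hxy ((hX.height_le_two x).trans_lt (by decide))

lemma wellFoundedLT : WellFoundedLT X := hX.height_strictMono.wellFoundedLT

lemma isMin_le {x : X} (hx : IsMin x) (y : X) : x ≤ y := by
  have := hX.wellFoundedLT
  obtain ⟨b, hby, hb⟩ := exists_minimal_le_of_wellFoundedLT (fun _ => True) y trivial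
  obtain ⟨r, -, hr⟩ := hX.uniqueMin
  rwa [hr x hx, ← hr b (minimal_true.mp hb)]

lemma isMin_or_mem_level (x : X) : IsMin x ∨ x ∈ level X 1 ∨ x ∈ level X 2 := by
  obtain ⟨n, hn⟩ := ENat.ne_top_iff_exists.mp ((hX.height_le_two x).trans_lt (by decide)).ne
  have h2 : n ≤ 2 := by exact_mod_cast hn ▸ hX.height_le_two x
  rw [← height_eq_zero]
  show height x = 0 ∨ height x = ((1 : ℕ) : ℕ∞) ∨ height x = ((2 : ℕ) : ℕ∞)
  interval_cases n <;> simp [← hn]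

lemma isMax_of_mem_level_two {m : X} (hm : m ∈ level X 2) : IsMax m := by
  refine isMax_iff_forall_not_lt.mpr fun u hmu => ?_
  have h := hX.height_strictMono hmu
  rw [show height m = (2 : ℕ) from hm] at h
  exact h.not_ge (by exact_mod_cast hX.height_le_two u)

lemma mem_level_two_of_lt {x z : X} (hx : x ∈ level X 1) (hxz : x < z) : z ∈ level X 2 := by
  rcases hX.isMin_or_mem_level z with hz | hz | hz
  · exact absurd hxz hz.not_lt
  · have h := hX.height_strictMono hxz
    rw [show height x = (1 : ℕ) from hx, show height z = (1 : ℕ) from hz] at h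
    exact absurd h (lt_irrefl _)
  · exact hz

lemma eq_or_isMin_or_lt_of_le {x x' : X} (h : x ≤ x') :
    x = x' ∨ IsMin x ∨ (x ∈ level X 1 ∧ x' ∈ level X 2 ∧ x < x') := by
  rcases h.eq_or_lt with h | h
  · exact Or.inl h
  rcases hX.isMin_or_mem_level x with hx | hx | hx
  · exact Or.inr (Or.inl hx)
  · exact Or.inr (Or.inr ⟨hx, hX.mem_level_two_of_lt hx h, h⟩)
  · exact absurd h ((hX.isMax_of_mem_level_two hx).not_lt)

lemma exists_strictUpperBounds_eq {m : X} (hm : m ∈ level X 2) {G : Set X}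
    (hG : G ⊆ level X 1) (hGf : G.Finite) :
    ∃ K ⊆ level X 1, K.Finite ∧ K.Nonempty ∧ Disjoint K G ∧ ∀ u, (∀ k ∈ K, k < u) ↔ u = m := by
  obtain ⟨K, hK1, hKf, hKG, hKm⟩ := hX.j3 m hm G hG hGf
  have hmK : m ∈ mub X K := hKm ▸ mem_singleton m
  have hub : ∀ u ∈ upperBounds K, u = m := by
    intro u hu
    have := hX.wellFoundedLT
    obtain ⟨b, hbu, hb⟩ := exists_minimal_le_of_wellFoundedLT (· ∈ upperBounds K) u hu
    have hbm : b = m := by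
      rw [← mem_singleton_iff, ← hKm]
      exact ⟨hb.prop, fun y hy => hb.not_lt hy⟩
    exact ((hX.isMax_of_mem_level_two hm).eq_of_le (hbm ▸ hbu)).symm
  have hKne : K.Nonempty := by
    rw [nonempty_iff_ne_empty]
    rintro rfl
    obtain ⟨r, hr, -⟩ := hX.uniqueMin
    exact not_isMin_of_mem_level hm two_ne_zero (hub r (by simp) ▸ hr)
  have hKlt : ∀ k ∈ K, k < m := fun k hk =>
    (hmK.1 hk).lt_of_ne fun h => absurd (eq_of_mem_level (hK1 hk) (h ▸ hm)) (by decide)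
  exact ⟨K, hK1, hKf, hKne, hKG, fun u =>
    ⟨fun h => hub u fun k hk => (h k hk).le, fun h => h ▸ hKlt⟩⟩

end IsJPoset

section StrOrder

variable {X : Type*} [PartialOrder X]

def fullPair (x : X) : Set X × Set X := ({x}, {z ∈ level X 2 | x < z})

namespace Str

lemma fst_subset (p : Str X) : p.1.1 ⊆ level X 1 := p.2.1

lemma snd_subset (p : Str X) : p.1.2 ⊆ level X 2 := p.2.2.1

lemma exists_lt_snd (p : Str X) : ∃ a ∈ p.1.1, ∀ b ∈ p.1.2, a < b := p.2.2.2.2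

lemma fst_nonempty (p : Str X) : p.1.1.Nonempty :=
  let ⟨a, ha, _⟩ := p.exists_lt_snd; ⟨a, ha⟩

lemma fst_finite (p : Str X) : p.1.1.Finite := by
  rcases p.2.2.2.1 with h | ⟨x, -, hA, -⟩
  exacts [h.1, hA ▸ finite_singleton x]

lemma snd_nonempty (hX : IsJPoset X) (p : Str X) : p.1.2.Nonempty := by
  rcases p.2.2.2.1 with h | ⟨x, hx, -, hB⟩
  · exact h.2.2.2
  · obtain ⟨z, hz⟩ := (hX.j2 x hx).nonempty
    exact ⟨z, hB ▸ ⟨hX.mem_level_two_of_lt hx hz, hz⟩⟩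

def full (x : X) (hx : x ∈ level X 1) : Str X :=
  ⟨fullPair x, singleton_subset_iff.mpr hx, sep_subset _ _, Or.inr ⟨x, hx, rfl, rfl⟩,
    x, mem_singleton x, fun _ hb => hb.2⟩

end Str

instance : Std.Refl (strLE (X := X)) := ⟨fun _ => Or.inl ⟨rfl, rfl⟩⟩

lemma strLT_iff_exists_dominates {p q : Str X} :
    strLT p q ↔ ∃ W, Dominates X q.1.1 q.1.2 p.1.1 p.1.2 W := by
  refine ⟨fun ⟨hle, hne⟩ => hle.resolve_left fun h => hne (Subtype.ext (Prod.ext h.1 h.2)),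
    fun ⟨W, hW⟩ => ⟨Or.inr ⟨W, hW⟩, ?_⟩⟩
  rintro rfl
  exact hW.1.ne rfl

lemma strLE.fst_subset {p q : Str X} (h : strLE p q) : p.1.1 ⊆ q.1.1 := by
  rcases h with ⟨h, -⟩ | ⟨W, hW⟩
  exacts [h.subset, hW.1.subset]

lemma strLE.snd_subset {p q : Str X} (h : strLE p q) : q.1.2 ⊆ p.1.2 := by
  rcases h with ⟨-, h⟩ | ⟨W, hW⟩
  exacts [h.symm.subset, hW.2.1]

lemma strLT.fst_ssubset {p q : Str X} (h : strLT p q) : p.1.1 ⊂ q.1.1 :=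
  let ⟨_, hW⟩ := strLT_iff_exists_dominates.mp h; hW.1

instance : Std.Antisymm (strLE (X := X)) :=
  ⟨fun _ _ hpq hqp => by_contra fun hne =>
    (strLT.fst_ssubset ⟨hpq, hne⟩).not_subset (strLE.fst_subset hqp)⟩

lemma strLT_full_of_strLT {q r : Str X} (h : strLT q r) {a : X} (ha : a ∈ q.1.1)
    (haq : ∀ b ∈ q.1.2, a < b) : strLT (Str.full a (q.fst_subset ha)) r := by
  obtain ⟨W, ⟨hqr, hqr'⟩, hrq, hWr, hW, hWlt, hup⟩ := strLT_iff_exists_dominates.mp h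
  refine strLT_iff_exists_dominates.mpr ⟨W, ⟨singleton_subset_iff.mpr (hqr ha), ?_⟩,
    fun d hd => ⟨r.snd_subset hd, haq d (hrq hd)⟩, hWr, hW, hWlt, ?_⟩
  · obtain ⟨c, hcr, hcq⟩ := exists_of_ssubset ⟨hqr, hqr'⟩
    exact fun hsub => hcq ((mem_singleton_iff.mp (hsub hcr)) ▸ ha)
  · exact fun a' ha' => (mem_singleton_iff.mp ha') ▸ hup a ha

end StrOrder

section StrJPoset

variable {X : Type*} [PartialOrder X] (hX : IsJPoset X)
include hX

/-- The pair `(C ∪ K, {m})`, with `K` from (J3) avoiding `C ∪ G`, dominates via `K` every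
`p` with `p.1.1 ⊆ C` and `m ∈ p.1.2`. -/
lemma IsJPoset.exists_common_strLT_snd_eq {C G : Set X} (hC : C ⊆ level X 1) (hCf : C.Finite)
    (hG : G ⊆ level X 1) (hGf : G.Finite) {m : X} (hm : m ∈ level X 2) :
    ∃ t : Str X, t.1.2 = {m} ∧ t.1.1 ∩ G ⊆ C ∧
      ∀ p : Str X, p.1.1 ⊆ C → m ∈ p.1.2 → strLT p t := by
  obtain ⟨K, hK1, hKf, ⟨k, hk⟩, hKCG, hKm⟩ :=
    hX.exists_strictUpperBounds_eq hm (union_subset hC hG) (hCf.union hGf)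
  have hkm : ∀ w ∈ K, w < m := (hKm m).mpr rfl
  let t : Str X := ⟨(C ∪ K, {m}), union_subset hC hK1, singleton_subset_iff.mpr hm,
    Or.inl ⟨hCf.union hKf, ⟨k, Or.inr hk⟩, finite_singleton m, singleton_nonempty m⟩,
    k, Or.inr hk, fun b hb => (mem_singleton_iff.mp hb) ▸ hkm k hk⟩
  refine ⟨t, rfl, ?_, fun p hpC hmp => strLT_iff_exists_dominates.mpr
    ⟨K, ⟨hpC.trans subset_union_left, fun h => ?_⟩, singleton_subset_iff.mpr hmp,
      subset_union_right, ⟨k, hk⟩, fun w hw d hd => (mem_singleton_iff.mp hd) ▸ hkm w hw,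
      fun _ _ u _ hu => (hKm u).mp hu⟩⟩
  · rintro x ⟨hx | hx, hxG⟩
    exacts [hx, absurd (Or.inr hxG) (disjoint_left.mp hKCG hx)]
  · exact disjoint_left.mp hKCG hk (Or.inl (hpC (h (Or.inr hk))))

lemma IsJPoset.exists_strLT_snd_eq {G : Set X} (hG : G ⊆ level X 1) (hGf : G.Finite)
    (p : Str X) {m : X} (hm : m ∈ p.1.2) :
    ∃ r : Str X, r.1.2 = {m} ∧ r.1.1 ∩ G ⊆ p.1.1 ∧ strLT p r := by
  obtain ⟨r, hr, hrG, hpr⟩ := hX.exists_common_strLT_snd_eq p.fst_subset p.fst_finite hG hGf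
    (p.snd_subset hm)
  exact ⟨r, hr, hrG, hpr p subset_rfl hm⟩

end StrJPoset

namespace Str

variable {X : Type*} [PartialOrder X]

def Joinable (p q : Str X) : Prop := ∃ t, strLE p t ∧ strLE q t

def UpDirected (p : Str X) : Prop := ∀ r s, strLT p r → strLT p s → Joinable r s

def IsFull (p : Str X) : Prop := ∀ q, (∀ r, strLT p r → strLT q r) → q = p

variable (hX : IsJPoset X)
include hX

lemma Joinable.snd_inter_nonempty {p q : Str X} (h : Joinable p q) :
    (p.1.2 ∩ q.1.2).Nonempty :=
  let ⟨t, hpt, hqt⟩ := h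
  let ⟨b, hb⟩ := t.snd_nonempty hX
  ⟨b, hpt.snd_subset hb, hqt.snd_subset hb⟩

lemma joinable_of_snd_eq {p q : Str X} {m : X} (hp : p.1.2 = {m}) (hq : q.1.2 = {m}) :
    Joinable p q := by
  obtain ⟨t, -, -, ht⟩ := hX.exists_common_strLT_snd_eq (union_subset p.fst_subset q.fst_subset)
    (p.fst_finite.union q.fst_finite) (empty_subset _) finite_empty
    (p.snd_subset (hp ▸ mem_singleton m))
  exact ⟨t, (ht p subset_union_left (hp ▸ mem_singleton m)).1,
    (ht q subset_union_right (hq ▸ mem_singleton m)).1⟩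

lemma upDirected_iff {p : Str X} : UpDirected p ↔ ∃ m, p.1.2 = {m} := by
  constructor
  · intro hp
    have hsub : p.1.2.Subsingleton := by
      intro b hb b' hb'
      obtain ⟨r, hr, -, hpr⟩ := hX.exists_strLT_snd_eq (empty_subset _) finite_empty p hb
      obtain ⟨s, hs, -, hps⟩ := hX.exists_strLT_snd_eq (empty_subset _) finite_empty p hb'
      have := (hp r s hpr hps).snd_inter_nonempty hX
      rwa [hr, hs, singleton_inter_nonempty, mem_singleton_iff] at this
    exact (hsub.eq_empty_or_singleton.resolve_left (p.snd_nonempty hX).ne_empty)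
  · rintro ⟨m, hm⟩ r s hpr hps
    have hsnd : ∀ r : Str X, strLT p r → r.1.2 = {m} := fun r hpr =>
      (r.snd_nonempty hX).subset_singleton_iff.mp (hm ▸ hpr.1.snd_subset)
    exact joinable_of_snd_eq hX (hsnd r hpr) (hsnd s hps)

lemma isFull_iff {p : Str X} : IsFull p ↔ ∃ x, p.1 = fullPair x := by
  constructor
  · intro hp
    obtain ⟨a, ha, haq⟩ := p.exists_lt_snd
    exact ⟨a, congrArg Subtype.val
      (hp (full a (p.fst_subset ha)) fun r hpr => strLT_full_of_strLT hpr ha haq).symm⟩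
  · rintro ⟨x, hpx⟩ q hpq
    have hmq : ∀ m ∈ p.1.2, q.1.1 ⊆ {x} ∧ m ∈ q.1.2 := by
      intro m hm
      obtain ⟨r, hr, hrq, hpr⟩ := hX.exists_strLT_snd_eq q.fst_subset q.fst_finite p hm
      have hqr := hpq r hpr
      refine ⟨fun c hc => ?_, hqr.1.snd_subset (hr ▸ mem_singleton m)⟩
      simpa [hpx, fullPair] using hrq ⟨hqr.1.fst_subset hc, hc⟩
    obtain ⟨m₀, hm₀⟩ := p.snd_nonempty hX
    have hqx : q.1.1 = {x} := q.fst_nonempty.subset_singleton_iff.mp (hmq m₀ hm₀).1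
    refine Subtype.ext (hpx ▸ Prod.ext hqx (Subset.antisymm (fun b hb => ?_) ?_))
    · obtain ⟨a, ha, haq⟩ := q.exists_lt_snd
      exact ⟨q.snd_subset hb, (hqx ▸ ha : a ∈ ({x} : Set X)) ▸ haq b hb⟩
    · exact fun m hm => (hmq m (hpx ▸ hm)).2

end Str

abbrev StrIso (X Y : Type*) [PartialOrder X] [PartialOrder Y] :=
  @RelIso (Str X) (Str Y) strLE strLE

namespace StrIso

variable {X Y : Type*} [PartialOrder X] [PartialOrder Y] (e : StrIso X Y)

lemma map_strLT {p q : Str X} : strLT (e p) (e q) ↔ strLT p q :=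
  and_congr e.map_rel_iff e.injective.ne_iff

lemma map_joinable {p q : Str X} (h : Str.Joinable p q) : Str.Joinable (e p) (e q) :=
  let ⟨t, hpt, hqt⟩ := h
  ⟨e t, e.map_rel_iff.mpr hpt, e.map_rel_iff.mpr hqt⟩

lemma map_upDirected {p : Str X} (h : Str.UpDirected p) : Str.UpDirected (e p) := by
  intro r s hr hs
  obtain ⟨r, rfl⟩ := e.surjective r
  obtain ⟨s, rfl⟩ := e.surjective s
  exact e.map_joinable (h r s (e.map_strLT.mp hr) (e.map_strLT.mp hs))

lemma map_isFull {p : Str X} (h : Str.IsFull p) : Str.IsFull (e p) := by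
  intro q hq
  obtain ⟨q, rfl⟩ := e.surjective q
  exact congrArg e (h q fun r hpr => e.map_strLT.mp (hq (e r) (e.map_strLT.mpr hpr)))

end StrIso

section Corr

variable {X Y : Type*} [PartialOrder X] [PartialOrder Y]

/-- The graph of the isomorphism `X ≃o Y` induced by `e`. -/
def Corr (e : StrIso X Y) (x : X) (y : Y) : Prop :=
  (IsMin x ∧ IsMin y) ∨ (∃ p : Str X, p.1 = fullPair x ∧ (e p).1 = fullPair y) ∨
    ∃ p : Str X, p.1.2 = {x} ∧ (e p).1.2 = {y}

variable {e : StrIso X Y} {x : X} {y : Y}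

lemma Corr.symm (h : Corr e x y) : Corr e.symm y x := by
  rcases h with h | ⟨p, hp, hep⟩ | ⟨p, hp, hep⟩
  · exact Or.inl h.symm
  · exact Or.inr (Or.inl ⟨e p, hep, by rwa [e.symm_apply_apply]⟩)
  · exact Or.inr (Or.inr ⟨e p, hep, by rwa [e.symm_apply_apply]⟩)

lemma Corr.isMin (h : Corr e x y) (hx : IsMin x) : IsMin y := by
  rcases h with h | ⟨p, hp, -⟩ | ⟨p, hp, -⟩
  · exact h.2
  · exact absurd hx (not_isMin_of_mem_level (p.fst_subset (hp ▸ mem_singleton x)) one_ne_zero)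
  · exact absurd hx (not_isMin_of_mem_level (p.snd_subset (hp ▸ mem_singleton x)) two_ne_zero)

lemma Corr.exists_fullPair (h : Corr e x y) (hx : x ∈ level X 1) :
    ∃ p : Str X, p.1 = fullPair x ∧ (e p).1 = fullPair y := by
  rcases h with h | h | ⟨p, hp, -⟩
  · exact absurd h.1 (not_isMin_of_mem_level hx one_ne_zero)
  · exact h
  · exact absurd (eq_of_mem_level hx (p.snd_subset (hp ▸ mem_singleton x))) (by decide)

lemma Corr.exists_snd (h : Corr e x y) (hx : x ∈ level X 2) :
    ∃ p : Str X, p.1.2 = {x} ∧ (e p).1.2 = {y} := by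
  rcases h with h | ⟨p, hp, -⟩ | h
  · exact absurd h.1 (not_isMin_of_mem_level hx two_ne_zero)
  · exact absurd (eq_of_mem_level hx (p.fst_subset (hp ▸ mem_singleton x))) (by decide)
  · exact h

variable (hX : IsJPoset X) (hY : IsJPoset Y)
include hX hY

lemma Corr.snd_map_eq (h : Corr e x y) {p : Str X} (hp : p.1.2 = {x}) : (e p).1.2 = {y} := by
  obtain ⟨p', hp', hep'⟩ := h.exists_snd (p.snd_subset (hp ▸ mem_singleton x))
  obtain ⟨y', hy'⟩ := (Str.upDirected_iff hY).mp
    (e.map_upDirected ((Str.upDirected_iff hX).mpr ⟨x, hp⟩))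
  have := (e.map_joinable (Str.joinable_of_snd_eq hX hp hp')).snd_inter_nonempty hY
  rw [hy', hep', singleton_inter_nonempty, mem_singleton_iff] at this
  rw [hy', this]

lemma Corr.unique (h : Corr e x y) {y' : Y} (h' : Corr e x y') : y = y' := by
  rcases hX.isMin_or_mem_level x with hx | hx | hx
  · obtain ⟨r, -, hr⟩ := hY.uniqueMin
    rw [hr y (h.isMin hx), hr y' (h'.isMin hx)]
  · obtain ⟨p, hp, hep⟩ := h.exists_fullPair hx
    obtain ⟨p', hp', hep'⟩ := h'.exists_fullPair hx
    obtain rfl : p = p' := Subtype.ext (hp.trans hp'.symm)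
    exact singleton_eq_singleton_iff.mp (congrArg Prod.fst (hep.symm.trans hep'))
  · obtain ⟨p, hp, hep⟩ := h'.exists_snd hx
    exact singleton_eq_singleton_iff.mp ((h.snd_map_eq hX hY hp).symm.trans hep)

/-- Incidence: `x < m` is witnessed by an element of `(Str X)_{m}` above the full pair of `x`. -/
lemma Corr.lt (h : Corr e x y) {m : X} {n : Y} (h' : Corr e m n) (hx : x ∈ level X 1)
    (hxm : x < m) : y < n := by
  have hm := hX.mem_level_two_of_lt hx hxm
  obtain ⟨p, hp, hep⟩ := h.exists_fullPair hx
  obtain ⟨q, hq, heq⟩ := h'.exists_snd hm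
  obtain ⟨r, hr, -, hpr⟩ := hX.exists_strLT_snd_eq (empty_subset _) finite_empty p
    (show m ∈ p.1.2 from hp ▸ ⟨hm, hxm⟩)
  have hnr : n ∈ (e r).1.2 := by
    have := (e.map_joinable (Str.joinable_of_snd_eq hX hr hq)).snd_inter_nonempty hY
    rwa [heq, inter_singleton_nonempty] at this
  have : n ∈ (e p).1.2 := (e.map_strLT.mpr hpr).1.snd_subset hnr
  rw [hep] at this
  exact this.2

lemma Corr.le (h : Corr e x y) {x' : X} {y' : Y} (h' : Corr e x' y') (hxx' : x ≤ x') :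
    y ≤ y' := by
  rcases hX.eq_or_isMin_or_lt_of_le hxx' with rfl | hx | ⟨hx, -, hlt⟩
  · exact (h.unique hX hY h').le
  · exact hY.isMin_le (h.isMin hx) y'
  · exact (h.lt hX hY h' hx hlt).le

lemma exists_corr (e : StrIso X Y) (x : X) : ∃ y, Corr e x y := by
  rcases hX.isMin_or_mem_level x with hx | hx | hx
  · obtain ⟨y, hy, -⟩ := hY.uniqueMin
    exact ⟨y, Or.inl ⟨hx, hy⟩⟩
  · obtain ⟨y, hy⟩ := (Str.isFull_iff hY).mp
      (e.map_isFull ((Str.isFull_iff hX).mpr ⟨x, rfl⟩) : Str.IsFull (e (Str.full x hx)))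
    exact ⟨y, Or.inr (Or.inl ⟨_, rfl, hy⟩)⟩
  · obtain ⟨t, ht, htx⟩ := hX.j4 {x} (singleton_subset_iff.mpr hx) (finite_singleton x)
      (singleton_nonempty x)
    let p : Str X := ⟨({t}, {x}), singleton_subset_iff.mpr ht, singleton_subset_iff.mpr hx,
      Or.inl ⟨finite_singleton t, singleton_nonempty t, finite_singleton x, singleton_nonempty x⟩,
      t, mem_singleton t, htx⟩
    obtain ⟨y, hy⟩ := (Str.upDirected_iff hY).mp
      (e.map_upDirected ((Str.upDirected_iff hX).mpr ⟨x, rfl⟩) : Str.UpDirected (e p))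
    exact ⟨y, Or.inr (Or.inr ⟨p, rfl, hy⟩)⟩

lemma exists_orderIso_corr (e : StrIso X Y) : ∃ ρ : X ≃o Y, ∀ x, Corr e x (ρ x) := by
  choose ρ hρ using exists_corr hX hY e
  have hρle : ∀ x x', ρ x ≤ ρ x' ↔ x ≤ x' := fun x x' =>
    ⟨(hρ x).symm.le hY hX (hρ x').symm, (hρ x).le hX hY (hρ x')⟩
  have hρsurj : Function.Surjective ρ := fun y =>
    let ⟨x, hx⟩ := exists_corr hY hX e.symm y
    ⟨x, (hρ x).unique hX hY hx.symm⟩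
  exact ⟨OrderIso.ofSurjective (OrderEmbedding.ofMapLEIff ρ hρle) hρsurj, hρ⟩

end Corr

/-- If `φ : Str X → Str Y` is an isomorphism, then there is an isomorphism
`ρ : X → Y` such that for all `x ∈ X₁`, `φ({x}, {z ∈ X₂ : z > x}) = ({ρ x}, {z ∈ Y₂ : z > ρ x})`,
and for all `m ∈ X₂`, `φ` maps `(Str X)_{{m}}` onto `(Str Y)_{{ρ m}}`. -/
theorem stmt_14 {X Y : Type*} [PartialOrder X] [PartialOrder Y]
    (hX : IsJPoset X) (hY : IsJPoset Y)
    (φ : Str X → Str Y) (hφsurj : Function.Surjective φ)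
    (hφord : ∀ p q : Str X, strLE p q ↔ strLE (φ p) (φ q)) :
    ∃ ρ : X → Y, Function.Surjective ρ ∧ (∀ x x' : X, x ≤ x' ↔ ρ x ≤ ρ x') ∧
      (∀ x ∈ level X 1, ∀ p : Str X, p.1 = ({x}, {z ∈ level X 2 | x < z}) →
        (φ p).1 = ({ρ x}, {z ∈ level Y 2 | ρ x < z})) ∧
      (∀ m ∈ level X 2,
        (∀ p : Str X, p.1.2 = {m} → (φ p).1.2 = {ρ m}) ∧
        (∀ q : Str Y, q.1.2 = {ρ m} → ∃ p : Str X, p.1.2 = {m} ∧ φ p = q)) := by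
  let e : StrIso X Y :=
    RelIso.ofSurjective (RelEmbedding.ofMapRelIff φ fun p q => (hφord p q).symm) hφsurj
  obtain ⟨ρ, hρ⟩ := exists_orderIso_corr hX hY e
  refine ⟨ρ, ρ.surjective, fun x x' => ρ.le_iff_le.symm, fun x hx p hp => ?_,
    fun m _ => ⟨fun p hp => (hρ m).snd_map_eq hX hY hp, fun q hq => ?_⟩⟩
  · obtain ⟨p', hp', hep'⟩ := (hρ x).exists_fullPair hx
    obtain rfl : p = p' := Subtype.ext (hp.trans hp'.symm)
    exact hep'
  · exact ⟨e.symm q, (hρ m).symm.snd_map_eq hY hX hq, e.apply_symm_apply q⟩
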